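/- arXiv:2506.11371 — 4 statements merged into one kernel-verified Lean document; each statement's English description precedes it below -/
import Mathlib

section
/- Cluster-based reweight is distortion-free: for every token x ∈ V, the average over a uniformly random watermark code θ ∈ {1,…,h} of the watermarked probability equals the original model probability, i.e., (1/h) · Σ_{θ=1}^{h} P_W(x | θ) = P_M(x). -/
open Finset

/-- **Cluster-based reweight is distortion-free.**
`V` is a finite nonempty token set, partitioned into `h ≥ 1` pairwise disjoint
nonempty clusters via the cluster map `cl : V → Fin h` (every token lies in
exactly one cluster; surjectivity of `cl` says every cluster is nonempty).
`PM` is a probability distribution on `V`, `Pr i` is the probability mass of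
cluster `i` (assumed positive), `Pc` is the overflow distribution
(division by zero is `0` in Lean, matching the convention that `Pc` is `0`
when the denominator vanishes), and `PW x θ` is the cluster-based reweighted
distribution for watermark code `θ`.  Then for every token `x`, the average of
`PW x θ` over a uniformly random `θ ∈ {1,…,h}` equals `PM x`. -/
theorem cluster_reweight_distortion_free
    (V : Type*) [Fintype V] [Nonempty V]
    (h : ℕ) (hh : 1 ≤ h)
    (cl : V → Fin h) (hcl : Function.Surjective cl)
    (PM : V → ℝ) (hPM0 : ∀ x, 0 ≤ PM x) (hPM1 : ∑ x, PM x = 1)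
    (Pr : Fin h → ℝ)
    (hPr : ∀ i, Pr i = ∑ x ∈ univ.filter (fun x => cl x = i), PM x)
    (hPrpos : ∀ i, 0 < Pr i)
    (Pc : Fin h → ℝ)
    (hPc : ∀ j, Pc j = max 0 ((h : ℝ) * Pr j - 1) / ∑ i, max 0 ((h : ℝ) * Pr i - 1))
    (PW : V → Fin h → ℝ)
    (hPW : ∀ x θ, PW x θ =
      min 1 ((h : ℝ) * Pr θ) * (if cl x = θ then PM x / Pr θ else 0)
        + max 0 (1 - (h : ℝ) * Pr θ) *
            ∑ j, Pc j * (if cl x = j then PM x / Pr j else 0))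
    (x : V) :
    (1 / (h : ℝ)) * ∑ θ, PW x θ = PM x := by

  have hhpos : (0:ℝ) < h := by exact_mod_cast hh
  have hsumPr : ∑ i, Pr i = 1 := by
    calc ∑ i, Pr i = ∑ i, ∑ x ∈ univ.filter (fun x => cl x = i), PM x := by
          exact Finset.sum_congr rfl fun i _ => hPr i
      _ = ∑ x, PM x := Finset.sum_fiberwise univ cl PM
      _ = 1 := hPM1
  set c := cl x with hc
  have hPrc := hPrpos c
  have h1 : ∑ θ, min 1 ((h:ℝ) * Pr θ) * (if cl x = θ then PM x / Pr θ else 0)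
      = min 1 ((h:ℝ) * Pr c) * (PM x / Pr c) := by
    rw [Finset.sum_eq_single c]
    · simp [← hc]
    · intro b _ hb; simp [← hc, Ne.symm hb]
    · simp
  have hinner : ∑ j, Pc j * (if cl x = j then PM x / Pr j else 0)
      = Pc c * (PM x / Pr c) := by
    rw [Finset.sum_eq_single c]
    · simp [← hc]
    · intro b _ hb; simp [← hc, Ne.symm hb]
    · simp
  have hsum : ∑ θ, PW x θ = min 1 ((h:ℝ) * Pr c) * (PM x / Pr c)
      + (∑ θ, max 0 (1 - (h:ℝ) * Pr θ)) * (Pc c * (PM x / Pr c)) := by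
    calc ∑ θ, PW x θ
        = ∑ θ, (min 1 ((h:ℝ) * Pr θ) * (if cl x = θ then PM x / Pr θ else 0)
          + max 0 (1 - (h:ℝ) * Pr θ) * (Pc c * (PM x / Pr c))) := by
          refine Finset.sum_congr rfl fun θ _ => ?_
          rw [hPW, hinner]
      _ = _ := by rw [Finset.sum_add_distrib, h1, ← Finset.sum_mul]
  set S := ∑ i, max 0 ((h:ℝ) * Pr i - 1) with hS
  have hST : S = ∑ θ, max 0 (1 - (h:ℝ) * Pr θ) := by
    have key : ∀ i : Fin h, max 0 ((h:ℝ) * Pr i - 1) - max 0 (1 - (h:ℝ) * Pr i)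
        = (h:ℝ) * Pr i - 1 := by
      intro i
      rcases le_total ((h:ℝ) * Pr i) 1 with hle | hle
      · rw [max_eq_left (by linarith), max_eq_right (by linarith)]; ring
      · rw [max_eq_right (by linarith), max_eq_left (by linarith)]; ring
    have : S - ∑ θ, max 0 (1 - (h:ℝ) * Pr θ) = 0 := by
      rw [hS, ← Finset.sum_sub_distrib]
      calc ∑ i, (max 0 ((h:ℝ) * Pr i - 1) - max 0 (1 - (h:ℝ) * Pr i))
          = ∑ i : Fin h, ((h:ℝ) * Pr i - 1) := Finset.sum_congr rfl fun i _ => key i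
        _ = (h:ℝ) * ∑ i, Pr i - h := by
            rw [Finset.sum_sub_distrib, Finset.mul_sum, Finset.sum_const]
            simp
        _ = 0 := by rw [hsumPr]; ring
    linarith
  by_cases hS0 : S = 0
  · have hall : ∀ i ∈ (univ : Finset (Fin h)), max 0 ((h:ℝ) * Pr i - 1) = 0 :=
      (Finset.sum_eq_zero_iff_of_nonneg (fun i _ => le_max_left _ _)).mp hS0
    have hall2 : ∀ i ∈ (univ : Finset (Fin h)), max 0 (1 - (h:ℝ) * Pr i) = 0 :=
      (Finset.sum_eq_zero_iff_of_nonneg (fun i _ => le_max_left _ _)).mp (hST ▸ hS0)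
    have hc1 : (h:ℝ) * Pr c = 1 := by
      have e1 := hall c (mem_univ c); have e2 := hall2 c (mem_univ c)
      have a1 : (h:ℝ) * Pr c - 1 ≤ 0 := by
        by_contra hcon; push_neg at hcon
        rw [max_eq_right (le_of_lt hcon)] at e1; linarith
      have a2 : 1 - (h:ℝ) * Pr c ≤ 0 := by
        by_contra hcon; push_neg at hcon
        rw [max_eq_right (le_of_lt hcon)] at e2; linarith
      linarith
    have hPcc : Pc c = 0 := by rw [hPc, hS0, div_zero]
    rw [hsum, hPcc, hc1]
    have hPrceq : Pr c = 1 / h := by field_simp at hc1 ⊢; linarith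
    rw [hPrceq]
    field_simp
    simp
  · have hSpos : 0 < S := lt_of_le_of_ne
      (Finset.sum_nonneg fun i _ => le_max_left _ _) (Ne.symm hS0)
    rw [hsum, ← hST, hPc c]
    have hcan : S * (max 0 ((h:ℝ) * Pr c - 1) / S * (PM x / Pr c))
        = max 0 ((h:ℝ) * Pr c - 1) * (PM x / Pr c) := by
      field_simp
    rw [hcan]
    have hminmax : min 1 ((h:ℝ) * Pr c) + max 0 ((h:ℝ) * Pr c - 1) = (h:ℝ) * Pr c := by
      rcases le_total ((h:ℝ) * Pr c) 1 with hle | hle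
      · rw [min_eq_right hle, max_eq_left (by linarith)]; ring
      · rw [min_eq_left hle, max_eq_right (by linarith)]; ring
    rw [← add_mul, hminmax]
    field_simp
end

section
/- (Case 1 of the distortion-freeness proof) If the token x ∈ V belongs to a cluster c_j with h·Pr(c_j) ≤ 1, then the average over a uniformly random watermark code θ ∈ {1,…,h} of the watermarked probability equals the original probability: (1/h) · Σ_{θ=1}^{h} P_W(x | θ) = (1/h) · h·Pr(c_j) · P_M(x)/Pr(c_j) = P_M(x). In particular, the overflow-sampling term contributes 0 to the probability of x since P_c(c_j) = 0 when h·Pr(c_j) ≤ 1. -/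
open Finset

/-- **Case 1 of the distortion-freeness proof.**
With the setup of cluster-based reweighting (finite nonempty token set `V`
partitioned into `h ≥ 1` nonempty clusters by `cl : V → Fin h`, probability
distribution `PM`, positive cluster probabilities `Pr`, overflow distribution
`Pc`, reweighted distribution `PW`):  if the token `x` belongs to a cluster
`j` with `h · Pr j ≤ 1`, then the average over a uniformly random watermark
code `θ` of the watermarked probability equals the original probability,
through the chain of equalities
`(1/h) · Σ_θ PW x θ = (1/h) · (h · Pr j) · (PM x / Pr j) = PM x`;
in particular the overflow term contributes nothing since `Pc j = 0`. -/
theorem cluster_reweight_distortion_free_case1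
    (V : Type*) [Fintype V] [Nonempty V]
    (h : ℕ) (hh : 1 ≤ h)
    (cl : V → Fin h) (hcl : Function.Surjective cl)
    (PM : V → ℝ) (hPM0 : ∀ x, 0 ≤ PM x) (hPM1 : ∑ x, PM x = 1)
    (Pr : Fin h → ℝ)
    (hPr : ∀ i, Pr i = ∑ x ∈ univ.filter (fun x => cl x = i), PM x)
    (hPrpos : ∀ i, 0 < Pr i)
    (Pc : Fin h → ℝ)
    (hPc : ∀ j, Pc j = max 0 ((h : ℝ) * Pr j - 1) / ∑ i, max 0 ((h : ℝ) * Pr i - 1))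
    (PW : V → Fin h → ℝ)
    (hPW : ∀ x θ, PW x θ =
      min 1 ((h : ℝ) * Pr θ) * (if cl x = θ then PM x / Pr θ else 0)
        + max 0 (1 - (h : ℝ) * Pr θ) *
            ∑ j, Pc j * (if cl x = j then PM x / Pr j else 0))
    (x : V) (j : Fin h) (hxj : cl x = j)
    (hcase : (h : ℝ) * Pr j ≤ 1) :
    (1 / (h : ℝ)) * ∑ θ, PW x θ = (1 / (h : ℝ)) * ((h : ℝ) * Pr j) * (PM x / Pr j)
      ∧ (1 / (h : ℝ)) * ((h : ℝ) * Pr j) * (PM x / Pr j) = PM x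
      ∧ Pc j = 0 := by

  have hPcj : Pc j = 0 := by
    rw [hPc, max_eq_left (by linarith : (h : ℝ) * Pr j - 1 ≤ 0), zero_div]
  have hinner : (∑ j', Pc j' * (if cl x = j' then PM x / Pr j' else 0)) = 0 := by
    apply Finset.sum_eq_zero
    intro j' _
    by_cases hj : j' = j
    · subst hj; rw [hPcj, zero_mul]
    · rw [if_neg (by rw [hxj]; exact fun e => hj e.symm), mul_zero]
  have hsum : (∑ θ, PW x θ) = ((h : ℝ) * Pr j) * (PM x / Pr j) := by
    have : (∑ θ, PW x θ) = ∑ θ, min 1 ((h : ℝ) * Pr θ) *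
        (if cl x = θ then PM x / Pr θ else 0) := by
      apply Finset.sum_congr rfl
      intro θ _
      rw [hPW, hinner, mul_zero, add_zero]
    rw [this, Finset.sum_eq_single j]
    · rw [if_pos hxj, min_eq_right hcase]
    · intro b _ hb
      rw [if_neg (by rw [hxj]; exact fun e => hb e.symm), mul_zero]
    · intro habs; exact absurd (Finset.mem_univ j) habs
  have hne : (h : ℝ) ≠ 0 := by positivity
  have hPrne : Pr j ≠ 0 := ne_of_gt (hPrpos j)
  refine ⟨by rw [hsum]; ring, ?_, hPcj⟩
  field_simp
end

section
/- (Case 2 of the distortion-freeness proof) If the token x ∈ V belongs to a cluster c_j with h·Pr(c_j) > 1, then the average over a uniformly random watermark code θ ∈ {1,…,h} of the watermarked probability equals the original probability: (1/h) · Σ_{θ=1}^{h} P_W(x | θ) = (1/h)·P_M(x)/Pr(c_j) + (1/h)·P_M(x)/Pr(c_j)·(h·Pr(c_j) − 1) = P_M(x). -/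
open Finset

/-- **Case 2 of the distortion-freeness proof.**
With the setup of cluster-based reweighting (finite nonempty token set `V`
partitioned into `h ≥ 1` nonempty clusters by `cl : V → Fin h`, probability
distribution `PM`, positive cluster probabilities `Pr`, overflow distribution
`Pc`, reweighted distribution `PW`):  if the token `x` belongs to a cluster
`j` with `h · Pr j > 1`, then the average over a uniformly random watermark
code `θ` of the watermarked probability equals the original probability,
through the chain of equalities
`(1/h) · Σ_θ PW x θ
  = (1/h) · PM x / Pr j + (1/h) · PM x / Pr j · (h · Pr j − 1) = PM x`. -/
theorem cluster_reweight_distortion_free_case2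
    (V : Type*) [Fintype V] [Nonempty V]
    (h : ℕ) (hh : 1 ≤ h)
    (cl : V → Fin h) (hcl : Function.Surjective cl)
    (PM : V → ℝ) (hPM0 : ∀ x, 0 ≤ PM x) (hPM1 : ∑ x, PM x = 1)
    (Pr : Fin h → ℝ)
    (hPr : ∀ i, Pr i = ∑ x ∈ univ.filter (fun x => cl x = i), PM x)
    (hPrpos : ∀ i, 0 < Pr i)
    (Pc : Fin h → ℝ)
    (hPc : ∀ j, Pc j = max 0 ((h : ℝ) * Pr j - 1) / ∑ i, max 0 ((h : ℝ) * Pr i - 1))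
    (PW : V → Fin h → ℝ)
    (hPW : ∀ x θ, PW x θ =
      min 1 ((h : ℝ) * Pr θ) * (if cl x = θ then PM x / Pr θ else 0)
        + max 0 (1 - (h : ℝ) * Pr θ) *
            ∑ j, Pc j * (if cl x = j then PM x / Pr j else 0))
    (x : V) (j : Fin h) (hxj : cl x = j)
    (hcase : 1 < (h : ℝ) * Pr j) :
    (1 / (h : ℝ)) * ∑ θ, PW x θ
        = (1 / (h : ℝ)) * (PM x / Pr j)
            + (1 / (h : ℝ)) * (PM x / Pr j) * ((h : ℝ) * Pr j - 1)
      ∧ (1 / (h : ℝ)) * (PM x / Pr j)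
            + (1 / (h : ℝ)) * (PM x / Pr j) * ((h : ℝ) * Pr j - 1) = PM x := by
  have hne : ((h : ℝ)) ≠ 0 := by positivity
  have hPrne : Pr j ≠ 0 := (hPrpos j).ne'
  -- sum of cluster probabilities is 1
  have hsumPr : ∑ i, Pr i = 1 := by
    simp_rw [hPr]
    rw [Finset.sum_fiberwise_eq_sum_filter]
    simpa using hPM1
  -- S = sum of positive overflows, T = sum of negative overflows
  set S : ℝ := ∑ i, max 0 ((h : ℝ) * Pr i - 1) with hS
  set T : ℝ := ∑ i, max 0 (1 - (h : ℝ) * Pr i) with hT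
  have hST : S = T := by
    have : S - T = ∑ i : Fin h, ((h : ℝ) * Pr i - 1) := by
      rw [hS, hT, ← Finset.sum_sub_distrib]
      refine Finset.sum_congr rfl fun i _ => ?_
      rcases le_total ((h : ℝ) * Pr i) 1 with hle | hle
      · rw [max_eq_left (by linarith), max_eq_right (by linarith)]; ring
      · rw [max_eq_right (by linarith), max_eq_left (by linarith)]; ring
    have h2 : ∑ i : Fin h, ((h : ℝ) * Pr i - 1) = 0 := by
      rw [Finset.sum_sub_distrib, ← Finset.mul_sum, hsumPr]
      simp
    linarith
  have hSpos : 0 < S := by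
    have h1 : max 0 ((h : ℝ) * Pr j - 1) ≤ S := by
      rw [hS]
      exact Finset.single_le_sum (f := fun i => max 0 ((h : ℝ) * Pr i - 1)) (fun i _ => le_max_left _ _) (Finset.mem_univ j)
    have h2 : (0 : ℝ) < max 0 ((h : ℝ) * Pr j - 1) :=
      lt_max_of_lt_right (by linarith)
    linarith
  have hPcj : Pc j = ((h : ℝ) * Pr j - 1) / S := by
    rw [hPc, max_eq_right (by linarith)]
  -- inner sum
  have hinner : ∀ θ : Fin h, PW x θ =
      min 1 ((h : ℝ) * Pr θ) * (if (j : Fin h) = θ then PM x / Pr θ else 0)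
        + max 0 (1 - (h : ℝ) * Pr θ) * (Pc j * (PM x / Pr j)) := by
    intro θ
    rw [hPW, hxj]
    congr 1
    congr 1
    rw [Finset.sum_eq_single j]
    · simp
    · intro b _ hb
      simp [Ne.symm hb]
    · simp
  have hsum : ∑ θ, PW x θ = PM x / Pr j + T * (Pc j * (PM x / Pr j)) := by
    simp_rw [hinner]
    rw [Finset.sum_add_distrib, ← Finset.sum_mul, ← hT]
    congr 1
    rw [Finset.sum_eq_single j]
    · simp [min_eq_left hcase.le]
    · intro b _ hb
      simp [Ne.symm hb]
    · simp
  constructor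
  · rw [hsum, ← hST, hPcj]
    field_simp
  · field_simp
    ring
end

section
/- (Cluster-level distortion-freeness) For every cluster index j ∈ {1,…,h}, the overall probability that the cluster-based reweight procedure finally samples from cluster c_j, averaged over a uniformly random reference cluster, equals the original cluster probability: (1/h)·min(1, h·Pr(c_j)) + (1/h)·(Σ_{i=1}^{h} max(0, 1 − h·Pr(c_i)))·P_c(c_j) = Pr(c_j). -/
open Finset

/-- **Cluster-level distortion-freeness.**
With the setup of cluster-based reweighting (finite nonempty token set `V`
partitioned into `h ≥ 1` nonempty clusters by `cl : V → Fin h`, probability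
distribution `PM`, positive cluster probabilities `Pr`, overflow distribution
`Pc`):  for every cluster index `j`, the overall probability that the
procedure finally samples from cluster `j`, averaged over a uniformly random
reference cluster, equals the original cluster probability:
`(1/h)·min(1, h·Pr j) + (1/h)·(Σ_i max(0, 1 − h·Pr i))·Pc j = Pr j`. -/
theorem cluster_reweight_cluster_level_distortion_free
    (V : Type*) [Fintype V] [Nonempty V]
    (h : ℕ) (hh : 1 ≤ h)
    (cl : V → Fin h) (hcl : Function.Surjective cl)
    (PM : V → ℝ) (hPM0 : ∀ x, 0 ≤ PM x) (hPM1 : ∑ x, PM x = 1)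
    (Pr : Fin h → ℝ)
    (hPr : ∀ i, Pr i = ∑ x ∈ univ.filter (fun x => cl x = i), PM x)
    (hPrpos : ∀ i, 0 < Pr i)
    (Pc : Fin h → ℝ)
    (hPc : ∀ j, Pc j = max 0 ((h : ℝ) * Pr j - 1) / ∑ i, max 0 ((h : ℝ) * Pr i - 1))
    (j : Fin h) :
    (1 / (h : ℝ)) * min 1 ((h : ℝ) * Pr j)
        + (1 / (h : ℝ)) * (∑ i, max 0 (1 - (h : ℝ) * Pr i)) * Pc j = Pr j := by

  have hhpos : (0:ℝ) < h := by exact_mod_cast hh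
  have hsum : ∑ i, Pr i = 1 := by
    rw [← hPM1]
    simp only [hPr]
    exact Finset.sum_fiberwise_eq_sum_filter univ univ cl PM ▸ by
      simp [Finset.sum_fiberwise]
  have hTS : (∑ i, max 0 (1 - (h : ℝ) * Pr i)) = ∑ i, max 0 ((h : ℝ) * Pr i - 1) := by
    have key : ∀ a : ℝ, max 0 (1 - a) = max 0 (a - 1) + (1 - a) := by
      intro a
      rcases le_total a 1 with hle | hle
      · rw [max_eq_right (by linarith), max_eq_left (by linarith)]; ring
      · rw [max_eq_left (by linarith), max_eq_right (by linarith)]; ring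
    simp_rw [key]
    rw [Finset.sum_add_distrib, Finset.sum_sub_distrib, ← Finset.mul_sum, hsum]
    simp
  rw [hTS, hPc]
  set S := ∑ i, max 0 ((h : ℝ) * Pr i - 1) with hS
  rcases eq_or_lt_of_le (show (0:ℝ) ≤ S from Finset.sum_nonneg fun i _ => le_max_left _ _) with h0 | h0
  · -- S = 0, so every term is 0, so h * Pr i ≤ 1 for all i
    have hall : ∀ i ∈ (univ : Finset (Fin h)), max 0 ((h : ℝ) * Pr i - 1) = 0 :=
      fun i _ => le_antisymm (by
        have := Finset.single_le_sum (f := fun i => max 0 ((h : ℝ) * Pr i - 1))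
          (fun i _ => le_max_left _ _) (Finset.mem_univ i)
        linarith) (le_max_left _ _)
    have hj : (h : ℝ) * Pr j ≤ 1 := by
      have := hall j (Finset.mem_univ j)
      by_contra hc
      push_neg at hc
      rw [max_eq_right (by linarith)] at this
      linarith
    rw [← h0, min_eq_right hj]
    field_simp
    simp
  · -- S > 0
    have hj' : max 0 ((h : ℝ) * Pr j - 1) / S * S = max 0 ((h : ℝ) * Pr j - 1) := by
      field_simp
    have : min 1 ((h : ℝ) * Pr j) + max 0 ((h : ℝ) * Pr j - 1) = (h : ℝ) * Pr j := by
      rcases le_total ((h : ℝ) * Pr j) 1 with hle | hle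
      · rw [min_eq_right hle, max_eq_left (by linarith)]; ring
      · rw [min_eq_left hle, max_eq_right (by linarith)]; ring
    have hc : (1 / (h:ℝ)) * S * ((0 ⊔ ((h:ℝ) * Pr j - 1)) / S)
        = (1/(h:ℝ)) * (0 ⊔ ((h:ℝ)*Pr j - 1)) := by
      rw [mul_assoc, mul_comm S, div_mul_cancel₀ _ h0.ne']
    rw [hc, ← mul_add, this]
    field_simp
end
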